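/- Let A, B be nonzero real numbers and let w be a real number with |w| < 1/(2√(|A·B|)). Then the series Σ_{i=0}^∞ c_i A^{i+1} B^i w^{2i+1} converges absolutely, and its sum u satisfies the equation u = (A + B·u²)·w. -/
import Mathlib

open Finset

lemma catalan_le_four_pow (n : ℕ) : catalan n ≤ 4 ^ n := by
  calc catalan n ≤ (n + 1) * catalan n := Nat.le_mul_of_pos_left _ n.succ_pos
    _ = n.centralBinom := succ_mul_catalan_eq_centralBinom n
    _ = (2 * n).choose n := rfl
    _ ≤ (2 * n + 1).choose n := Nat.choose_le_choose n (Nat.le_succ _)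
    _ ≤ 4 ^ n := Nat.choose_middle_le_pow n

lemma catalan_gf_summable {x : ℝ} (hx : |x| < 1 / 4) :
    Summable (fun n : ℕ => |(catalan n : ℝ) * x ^ n|) := by
  have hle : ∀ n : ℕ, |(catalan n : ℝ) * x ^ n| ≤ (4 * |x|) ^ n := by
    intro n
    rw [abs_mul, abs_pow, mul_pow]
    apply mul_le_mul_of_nonneg_right _ (pow_nonneg (abs_nonneg x) n)
    rw [Nat.abs_cast]
    calc (catalan n : ℝ) ≤ ((4 ^ n : ℕ) : ℝ) := by
          exact_mod_cast catalan_le_four_pow n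
      _ = 4 ^ n := by push_cast; ring
  have hg : Summable (fun n : ℕ => (4 * |x|) ^ n) :=
    summable_geometric_of_lt_one (by positivity) (by linarith)
  exact Summable.of_nonneg_of_le (fun n => abs_nonneg _) hle hg

lemma catalan_gf_eq {x : ℝ} (hx : |x| < 1 / 4) :
    (∑' n : ℕ, (catalan n : ℝ) * x ^ n) =
      1 + x * (∑' n : ℕ, (catalan n : ℝ) * x ^ n) ^ 2 := by
  have hs := catalan_gf_summable hx
  have hs' : Summable (fun n : ℕ => ‖(catalan n : ℝ) * x ^ n‖) := by
    simpa only [Real.norm_eq_abs] using hs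
  have hsum : Summable (fun n : ℕ => (catalan n : ℝ) * x ^ n) := hs'.of_norm
  set f := ∑' n : ℕ, (catalan n : ℝ) * x ^ n with hf
  have cauchy : f * f = ∑' n : ℕ, ∑ ij ∈ antidiagonal n,
      ((catalan ij.1 : ℝ) * x ^ ij.1) * ((catalan ij.2 : ℝ) * x ^ ij.2) :=
    tsum_mul_tsum_eq_tsum_sum_antidiagonal_of_summable_norm hs' hs'
  have hterm : ∀ n : ℕ, (∑ ij ∈ antidiagonal n,
      ((catalan ij.1 : ℝ) * x ^ ij.1) * ((catalan ij.2 : ℝ) * x ^ ij.2)) =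
      (catalan (n + 1) : ℝ) * x ^ n := by
    intro n
    rw [catalan_succ' n]
    push_cast
    rw [Finset.sum_mul]
    apply Finset.sum_congr rfl
    intro ij hij
    have := Finset.HasAntidiagonal.mem_antidiagonal.mp hij
    rw [← this, pow_add]
    ring
  have cauchy' : f * f = ∑' n : ℕ, (catalan (n + 1) : ℝ) * x ^ n := by
    rw [cauchy]; exact tsum_congr hterm
  have hshift : x * ∑' n : ℕ, (catalan (n + 1) : ℝ) * x ^ n =
      ∑' n : ℕ, (catalan (n + 1) : ℝ) * x ^ (n + 1) := by
    rw [← tsum_mul_left]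
    apply tsum_congr; intro n; ring
  have hzero : f = (catalan 0 : ℝ) * x ^ 0 +
      ∑' n : ℕ, (catalan (n + 1) : ℝ) * x ^ (n + 1) :=
    Summable.tsum_eq_zero_add hsum
  have : f = 1 + x * (f * f) := by
    rw [cauchy', hshift]
    simpa using hzero
  calc f = 1 + x * (f * f) := this
    _ = 1 + x * f ^ 2 := by ring

/-- For nonzero reals `A, B` and real `w` with `|w| < 1/(2√|A·B|)`,
the series `Σ_{i=0}^∞ c_i A^{i+1} B^i w^{2i+1}` converges absolutely, and its sum
`u` satisfies `u = (A + B·u²)·w`. -/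
theorem catalan_series_converges_and_solves (A B w : ℝ) (hA : A ≠ 0) (hB : B ≠ 0)
    (hw : |w| < 1 / (2 * Real.sqrt |A * B|)) :
    Summable (fun i : ℕ =>
      |(catalan i : ℝ) * A ^ (i + 1) * B ^ i * w ^ (2 * i + 1)|) ∧
    (∑' i : ℕ, (catalan i : ℝ) * A ^ (i + 1) * B ^ i * w ^ (2 * i + 1)) =
      (A + B * (∑' i : ℕ,
          (catalan i : ℝ) * A ^ (i + 1) * B ^ i * w ^ (2 * i + 1)) ^ 2) * w := by
  set x := A * B * w ^ 2 with hxdef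
  have hABpos : (0 : ℝ) < |A * B| := abs_pos.mpr (mul_ne_zero hA hB)
  have hsq : Real.sqrt |A * B| ^ 2 = |A * B| := Real.sq_sqrt hABpos.le
  have hsqpos : 0 < Real.sqrt |A * B| := Real.sqrt_pos.mpr hABpos
  have hx : |x| < 1 / 4 := by
    have hw2 : w ^ 2 < 1 / (4 * |A * B|) := by
      have h1 : |w| ^ 2 < (1 / (2 * Real.sqrt |A * B|)) ^ 2 := by
        apply pow_lt_pow_left₀ hw (abs_nonneg w) (by norm_num)
      rw [sq_abs] at h1
      calc w ^ 2 < (1 / (2 * Real.sqrt |A * B|)) ^ 2 := h1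
        _ = 1 / (4 * |A * B|) := by
            rw [div_pow, mul_pow, hsq]; norm_num
    have : |x| = |A * B| * w ^ 2 := by
      rw [hxdef, abs_mul, abs_of_nonneg (sq_nonneg w)]
    rw [this]
    calc |A * B| * w ^ 2 < |A * B| * (1 / (4 * |A * B|)) := by
          exact mul_lt_mul_of_pos_left hw2 hABpos
      _ = 1 / 4 := by field_simp
  have hterm : ∀ i : ℕ, (catalan i : ℝ) * A ^ (i + 1) * B ^ i * w ^ (2 * i + 1) =
      (A * w) * ((catalan i : ℝ) * x ^ i) := by
    intro i
    rw [hxdef, mul_pow, mul_pow, ← pow_mul]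
    ring
  have hs := catalan_gf_summable hx
  have hsummable : Summable (fun i : ℕ =>
      |(catalan i : ℝ) * A ^ (i + 1) * B ^ i * w ^ (2 * i + 1)|) := by
    have := hs.mul_left |A * w|
    apply this.congr
    intro i
    rw [← abs_mul, ← hterm i]
  refine ⟨hsummable, ?_⟩
  have hu : (∑' i : ℕ, (catalan i : ℝ) * A ^ (i + 1) * B ^ i * w ^ (2 * i + 1)) =
      (A * w) * ∑' n : ℕ, (catalan n : ℝ) * x ^ n := by
    rw [← tsum_mul_left]
    exact tsum_congr hterm
  rw [hu]
  set f := ∑' n : ℕ, (catalan n : ℝ) * x ^ n with hf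
  have hfeq : f = 1 + x * f ^ 2 := by
    rw [hf]; exact catalan_gf_eq hx
  calc A * w * f = A * w * (1 + x * f ^ 2) := by rw [← hfeq]
    _ = (A + B * (A * w * f) ^ 2) * w := by rw [hxdef]; ring
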